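/- Let t₄ = −(5/4)A³ − 3A²B − (3/4)A²C − 6ABC + (9/4)AC² − (3/2)BC² + C³ and t₅ = (4/5)A³ − (3/5)A²C + 3B²C in ℚ[A,B,C]. Then both Milnor rings M(t₄) = ℚ[A,B,C]/D(t₄) and M(t₅) = ℚ[A,B,C]/D(t₅) are infinite-dimensional as ℚ-vector spaces, where D(p) denotes the ideal generated by the three partial derivatives of p. -/

import Mathlib

open MvPolynomial

noncomputable section

/-- The trilinear form `t₄ = -(5/4)A³ - 3A²B - (3/4)A²C - 6ABC + (9/4)AC² - (3/2)BC² + C³`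
of the family `𝒳(Δ₄)`, with `A = X 0`, `B = X 1`, `C = X 2`. -/
def t4 : MvPolynomial (Fin 3) ℚ :=
  - (C (5 / 4) * X 0 ^ 3) - C 3 * X 0 ^ 2 * X 1 - C (3 / 4) * X 0 ^ 2 * X 2
    - C 6 * X 0 * X 1 * X 2 + C (9 / 4) * X 0 * X 2 ^ 2 - C (3 / 2) * X 1 * X 2 ^ 2
    + X 2 ^ 3

/-- The trilinear form `t₅ = (4/5)A³ - (3/5)A²C + 3B²C` of the family `𝒳₁(Δ₅)`. -/
def t5 : MvPolynomial (Fin 3) ℚ :=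
  C (4 / 5) * X 0 ^ 3 - C (3 / 5) * X 0 ^ 2 * X 2 + C 3 * X 1 ^ 2 * X 2

/-- The Jacobian ideal `D(t₄)`. -/
def D4 : Ideal (MvPolynomial (Fin 3) ℚ) :=
  Ideal.span {pderiv 0 t4, pderiv 1 t4, pderiv 2 t4}

/-- The Jacobian ideal `D(t₅)`. -/
def D5 : Ideal (MvPolynomial (Fin 3) ℚ) :=
  Ideal.span {pderiv 0 t5, pderiv 1 t5, pderiv 2 t5}


def ev' (i : Fin 3) : MvPolynomial (Fin 3) ℚ →ₐ[ℚ] Polynomial ℚ :=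
  aeval (fun j => if j = i then Polynomial.X else 0)

lemma ev'_surj (i : Fin 3) : Function.Surjective (ev' i) := by
  intro p
  refine ⟨Polynomial.aeval (X i : MvPolynomial (Fin 3) ℚ) p, ?_⟩
  rw [show (ev' i) ((Polynomial.aeval (X i : MvPolynomial (Fin 3) ℚ)) p)
      = Polynomial.aeval ((ev' i) (X i : MvPolynomial (Fin 3) ℚ)) p from
      (Polynomial.aeval_algHom_apply (ev' i) _ p).symm]
  simp [ev']

lemma not_fd (I : Ideal (MvPolynomial (Fin 3) ℚ)) (i : Fin 3)
    (h : ∀ p ∈ I, ev' i p = 0) :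
    ¬ FiniteDimensional ℚ (MvPolynomial (Fin 3) ℚ ⧸ I) := by
  intro hFD
  let q := Ideal.Quotient.liftₐ I (ev' i) h
  have hs : Function.Surjective q := by
    intro p
    obtain ⟨x, hx⟩ := ev'_surj i p
    exact ⟨Ideal.Quotient.mk I x, by
      simp only [q, Ideal.Quotient.liftₐ_apply, Ideal.Quotient.lift_mk, AlgHom.coe_toRingHom]; exact hx⟩
  have : FiniteDimensional ℚ (Polynomial ℚ) :=
    Module.Finite.of_surjective q.toLinearMap hs
  have := FiniteDimensional.fintypeBasisIndex (Polynomial.basisMonomials ℚ)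
  exact not_finite ℕ

/-- The Milnor rings `M(t₄) = ℚ[A,B,C]/D(t₄)` and `M(t₅) = ℚ[A,B,C]/D(t₅)` are both
infinite-dimensional as `ℚ`-vector spaces. -/
theorem milnor_rings_t4_t5_infinite_dimensional :
    ¬ FiniteDimensional ℚ (MvPolynomial (Fin 3) ℚ ⧸ D4) ∧
    ¬ FiniteDimensional ℚ (MvPolynomial (Fin 3) ℚ ⧸ D5) := by
  constructor
  · refine not_fd D4 1 ?_
    intro p hp
    have hle : D4 ≤ RingHom.ker (ev' 1) := by
      rw [D4, Ideal.span_le]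
      intro g hg
      simp only [Set.mem_insert_iff, Set.mem_singleton_iff] at hg
      rcases hg with rfl | rfl | rfl <;>
        simp [RingHom.mem_ker, t4, ev', pderiv_mul, pderiv_pow, pderiv_C, pderiv_X]
    exact hle hp
  · refine not_fd D5 2 ?_
    intro p hp
    have hle : D5 ≤ RingHom.ker (ev' 2) := by
      rw [D5, Ideal.span_le]
      intro g hg
      simp only [Set.mem_insert_iff, Set.mem_singleton_iff] at hg
      rcases hg with rfl | rfl | rfl <;>
        simp [RingHom.mem_ker, t5, ev', pderiv_mul, pderiv_pow, pderiv_C, pderiv_X]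
    exact hle hp

end
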